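/- There is a case where natural revision is strictly closer than uncontingent revision: for C_x = [{xy, x¬y}, {¬xy, ¬x¬y}], diff(C_x nat(true>y), C_x) ⊊ diff(C_x unc(true>y), C_x); concretely, natural revision only removes the pair x¬y ≤ xy, while uncontingent revision additionally removes ¬x¬y ≤ ¬xy. -/
import Mathlib


open Classical

/- Models are elements of a finite type `M`; propositional formulas are identified with
their sets of models (`Set M`).  A connected preorder (ordered partition
`[C(0),…,C(m)]`, classes possibly empty) is represented by its rank function
`r : M → ℕ`, where `r I` is the index of the class of `I`.  Equality of orders means
equality of the induced binary relations (`sameOrd`). -/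

/-- least class index containing a model of `F` -/
noncomputable def minidx {M : Type*} (r : M → ℕ) (F : Set M) : ℕ := sInf (r '' F)

/-- greatest class index containing a model of `F` -/
noncomputable def maxidx {M : Type*} (r : M → ℕ) (F : Set M) : ℕ := sSup (r '' F)

/-- propositional natural revision:
`C nat(A) = [C(minidx A)∩A, C(0),…,C(minidx A−1), C(minidx A)∖A, C(minidx A+1),…,C(m)]` -/
noncomputable def natSimple {M : Type*} (r : M → ℕ) (A : Set M) : M → ℕ :=
  fun I => if I ∈ A ∧ r I = minidx r A then 0 else r I + 1

/-- conditional natural revision: the models of `P∧¬A` in classes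
`minidx(P)..minidx(P∧A)` are dropped below the other models of those classes. -/
noncomputable def natRev {M : Type*} (r : M → ℕ) (P A : Set M) : M → ℕ := fun I =>
  if r I < minidx r P then r I
  else if r I ≤ minidx r (P ∩ A) then
    (if I ∈ P ∩ Aᶜ then r I + (minidx r (P ∩ A) - minidx r P + 1) else r I)
  else r I + (minidx r (P ∩ A) - minidx r P + 1)

/-- uncontingent revision: the models of `P∧¬A` in classes
`minidx(P)..maxidx(P∧A)` are dropped below the other models of those classes. -/
noncomputable def uncRev {M : Type*} (r : M → ℕ) (P A : Set M) : M → ℕ := fun I =>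
  if r I < minidx r P then r I
  else if r I ≤ maxidx r (P ∩ A) then
    (if I ∈ P ∩ Aᶜ then r I + (maxidx r (P ∩ A) - minidx r P + 1) else r I)
  else r I + (maxidx r (P ∩ A) - minidx r P + 1)

/-- lexicographic revision: `C lex(F) = [C(0)∩F,…,C(m)∩F, C(0)∖F,…,C(m)∖F]` -/
noncomputable def lexRev {M : Type*} [Fintype M] (r : M → ℕ) (F : Set M) : M → ℕ := fun I =>
  if I ∈ F then r I else r I + (Finset.univ.sup r + 1)

/-- line-down revision: the minimal models of `P∧A` are lifted to a new class just
above class `minidx(P∧¬A)`; all other models keep their classes. -/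
noncomputable def dowRev {M : Type*} (r : M → ℕ) (P A : Set M) : M → ℕ := fun I =>
  if minidx r (P ∩ A) < minidx r (P ∩ Aᶜ) then r I
  else if I ∈ P ∩ A ∧ r I = minidx r (P ∩ A) then minidx r (P ∩ Aᶜ)
  else if r I < minidx r (P ∩ Aᶜ) then r I
  else r I + 1

/-- an order satisfies the conditional `P>A` iff every minimal model of `P∧A`
is strictly below every model of `P∧¬A` -/
def satisfiesCond {M : Type*} (r : M → ℕ) (P A : Set M) : Prop :=
  ∀ I ∈ P ∩ A, (∀ J ∈ P ∩ A, r I ≤ r J) → ∀ K ∈ P ∩ Aᶜ, r I < r K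

/-- the order viewed as a set of pairs `I ≤ J` -/
def ordRel {M : Type*} (r : M → ℕ) : Set (M × M) := {p | r p.1 ≤ r p.2}

/-- difference of two orders: symmetric difference of their sets of pairs -/
def diffOrd {M : Type*} (r r' : M → ℕ) : Set (M × M) := symmDiff (ordRel r) (ordRel r')

/-- equality of the induced connected preorders -/
def sameOrd {M : Type*} (r r' : M → ℕ) : Prop := ∀ I J : M, (r I ≤ r J ↔ r' I ≤ r' J)

/-- the order `C_x = [{xy, x¬y}, {¬xy, ¬x¬y}]` over the alphabet `{x,y}`;
a model is a pair `(x, y)` of Boolean values. -/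
def Cx : Bool × Bool → ℕ := fun m => if m.1 then 0 else 1

/-- the formula `y` -/
def Yset : Set (Bool × Bool) := {m | m.2 = true}

/-- the formula `x` -/
def Xset : Set (Bool × Bool) := {m | m.1 = true}

/-- the order `[{xy}, {x¬y}, {¬xy, ¬x¬y}]` -/
def targetNat : Bool × Bool → ℕ := fun m =>
  if m.1 then (if m.2 then 0 else 1) else 2


lemma min1 : minidx Cx (Set.univ ∩ Yset) = 0 := by
  apply Nat.sInf_eq_zero.mpr
  left; exact ⟨(true,true), ⟨trivial, rfl⟩, rfl⟩

lemma min2 : minidx Cx (Set.univ : Set (Bool×Bool)) = 0 := by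
  apply Nat.sInf_eq_zero.mpr
  left; exact ⟨(true,true), trivial, rfl⟩

lemma img : Cx '' (Set.univ ∩ Yset) = {0,1} := by
  ext n
  constructor
  · rintro ⟨⟨a,b⟩, ⟨-, hb⟩, rfl⟩
    cases a <;> simp [Cx]
  · rintro (rfl|rfl)
    · exact ⟨(true,true), ⟨trivial, rfl⟩, rfl⟩
    · exact ⟨(false,true), ⟨trivial, rfl⟩, rfl⟩

lemma max1 : maxidx Cx (Set.univ ∩ Yset) = 1 := by
  unfold maxidx; rw [img]
  rw [show ({0,1}:Set ℕ) = Set.Iic 1 by ext n; simp [Nat.le_one_iff_eq_zero_or_eq_one]]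
  exact csSup_Iic

lemma min1' : minidx Cx {m : Bool×Bool | m.2 = true} = 0 := by
  rw [show {m : Bool×Bool | m.2 = true} = Set.univ ∩ Yset by simp [Yset]]; exact min1

lemma max1' : maxidx Cx {m : Bool×Bool | m.2 = true} = 1 := by
  rw [show {m : Bool×Bool | m.2 = true} = Set.univ ∩ Yset by simp [Yset]]; exact max1

lemma natEq : natRev Cx Set.univ Yset = targetNat := by
  funext m
  rcases m with ⟨a,b⟩
  cases a <;> cases b <;>
    simp [natRev, min1, min1', min2, Cx, targetNat, Yset]

def Uexp : Bool × Bool → ℕ := fun m =>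
  if m.2 then (if m.1 then 0 else 1) else (if m.1 then 2 else 3)

lemma uncEq : uncRev Cx Set.univ Yset = Uexp := by
  funext m
  rcases m with ⟨a,b⟩
  cases a <;> cases b <;>
    simp [uncRev, min2, max1, max1', Cx, Uexp, Yset]

/-- `diff(C_x nat(true>y), C_x) ⊊ diff(C_x unc(true>y), C_x)`;
concretely, natural revision only removes the pair `x¬y ≤ xy`, while uncontingent
revision additionally removes `¬x¬y ≤ ¬xy`. -/
theorem natural_strictly_lesschange_uncontingent :
    diffOrd (natRev Cx Set.univ Yset) Cx ⊂ diffOrd (uncRev Cx Set.univ Yset) Cx ∧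
    ordRel Cx \ ordRel (natRev Cx Set.univ Yset) = {((true, false), (true, true))} ∧
    ((false, false), (false, true)) ∈ ordRel Cx \ ordRel (uncRev Cx Set.univ Yset) := by
  rw [natEq, uncEq]
  refine ⟨⟨?_, ?_⟩, ?_, ?_⟩
  · rintro ⟨⟨a,b⟩,⟨c,d⟩⟩ hp
    simp only [diffOrd, symmDiff, ordRel, Set.sup_eq_union, Set.mem_union, Set.mem_diff,
      Set.mem_setOf_eq] at hp ⊢
    revert hp
    cases a <;> cases b <;> cases c <;> cases d <;> decide
  · intro h
    have := h (show (((false,false),(false,true)) : (Bool×Bool)×(Bool×Bool)) ∈ _ by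
      simp only [diffOrd, symmDiff, ordRel, Set.sup_eq_union, Set.mem_union, Set.mem_diff,
        Set.mem_setOf_eq]
      decide)
    simp only [diffOrd, symmDiff, ordRel, Set.sup_eq_union, Set.mem_union, Set.mem_diff,
      Set.mem_setOf_eq] at this
    revert this; decide
  · ext ⟨⟨a,b⟩,⟨c,d⟩⟩
    simp only [ordRel, Set.mem_diff, Set.mem_setOf_eq, Set.mem_singleton_iff, Prod.mk.injEq]
    cases a <;> cases b <;> cases c <;> cases d <;> decide
  · simp only [ordRel, Set.mem_diff, Set.mem_setOf_eq]
    decide
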